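/- Let P_NS := h̃ ∘ g̃⁻¹ be the neutron star equation of state. Then there exist constants 0 < c ≤ C such that: (i) |P_NS(ρ) − ρ/3| ≤ C ρ^{1/2} for all ρ ≥ 0, and |P_NS′(ρ) − 1/3| ≤ C ρ^{−1/2} for all ρ > 0; (ii) for all sufficiently small ρ > 0, c ρ^{2/3} ≤ P_NS′(ρ) ≤ ρ^{2/3} and c ρ^{5/3} ≤ P_NS(ρ) ≤ C ρ^{5/3}; (iii) P_NS : [0,∞) → [0,∞) is a bijection whose inverse satisfies |P_NS⁻¹(q) − 3q| ≤ C q^{1/2} for all q > 0. -/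

import Mathlib

open MeasureTheory

noncomputable section

/-- `g̃(y) = 3 ∫₀^y s² √(1+s²) ds`, the neutron-star energy density parametrization. -/
def gtilde (y : ℝ) : ℝ := 3 * ∫ s in (0:ℝ)..y, s ^ 2 * Real.sqrt (1 + s ^ 2)

/-- `h̃(y) = ∫₀^y s⁴ / √(1+s²) ds`, the neutron-star pressure parametrization. -/
def htilde (y : ℝ) : ℝ := ∫ s in (0:ℝ)..y, s ^ 4 / Real.sqrt (1 + s ^ 2)

/-! With `y = g̃⁻¹(ρ)` we have `P_NS(ρ) = h̃(y)` and, by the inverse function rule,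
`P_NS′(ρ) = h̃′(y) / g̃′(y) = y² / (3 (1 + y²))`. The integrands of `g̃/3` and `h̃` differ by
`s² / √(1 + s²)`, so `ρ/3 − P_NS(ρ) = ∫₀^y s² / √(1 + s²) ds ≤ min (y³/3) (y²/2)`. Comparing the
integrands with powers of `s` gives `y³ ≤ g̃(y) ≤ y³ √(1 + y²)`, `3 y⁴ ≤ 4 g̃(y)` and
`min y⁴ y⁵ ≤ 10 h̃(y) ≤ 2 y⁵`; every estimate then reduces to comparing powers of `y`. -/

open intervalIntegral Set Filter Real

lemma integral_le_of_le_mul_pow {f : ℝ → ℝ} {a b c : ℝ} (n : ℕ) (hab : a ≤ b)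
    (hf : IntervalIntegrable f volume a b) (h : ∀ s ∈ Icc a b, f s ≤ c * s ^ n) :
    ∫ s in a..b, f s ≤ c * (b ^ (n + 1) - a ^ (n + 1)) / (n + 1) := by
  calc ∫ s in a..b, f s ≤ ∫ s in a..b, c * s ^ n :=
        integral_mono_on hab hf ((continuous_const.mul (continuous_pow n)).intervalIntegrable a b) h
    _ = _ := by rw [intervalIntegral.integral_const_mul, integral_pow, mul_div_assoc]

lemma le_integral_of_mul_pow_le {f : ℝ → ℝ} {a b c : ℝ} (n : ℕ) (hab : a ≤ b)
    (hf : IntervalIntegrable f volume a b) (h : ∀ s ∈ Icc a b, c * s ^ n ≤ f s) :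
    c * (b ^ (n + 1) - a ^ (n + 1)) / (n + 1) ≤ ∫ s in a..b, f s := by
  calc _ = ∫ s in a..b, c * s ^ n := by
        rw [intervalIntegral.integral_const_mul, integral_pow, mul_div_assoc]
    _ ≤ ∫ s in a..b, f s :=
        integral_mono_on hab ((continuous_const.mul (continuous_pow n)).intervalIntegrable a b) hf h

lemma abs_le_mul_sqrt_of_sq_le {x C z : ℝ} (hC : 0 ≤ C) (h : x ^ 2 ≤ C ^ 2 * z) :
    |x| ≤ C * √z := by
  calc |x| ≤ √(C ^ 2 * z) := abs_le_sqrt h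
    _ = C * √z := by rw [sqrt_mul (sq_nonneg C), sqrt_sq hC]

lemma one_le_sqrt_one_add_sq (s : ℝ) : 1 ≤ √(1 + s ^ 2) :=
  one_le_sqrt.2 (le_add_of_nonneg_right (sq_nonneg s))

lemma sqrt_one_add_sq_pos (s : ℝ) : 0 < √(1 + s ^ 2) :=
  one_pos.trans_le (one_le_sqrt_one_add_sq s)

lemma le_sqrt_one_add_sq (s : ℝ) : s ≤ √(1 + s ^ 2) :=
  le_sqrt_of_sq_le (by linarith)

lemma continuous_sq_mul_sqrt_one_add_sq : Continuous fun s : ℝ => s ^ 2 * √(1 + s ^ 2) := by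
  fun_prop

lemma continuous_pow_div_sqrt_one_add_sq (n : ℕ) :
    Continuous fun s : ℝ => s ^ n / √(1 + s ^ 2) := by
  fun_prop (disch := exact fun s => (sqrt_one_add_sq_pos s).ne')

lemma hasDerivAt_gtilde (y : ℝ) : HasDerivAt gtilde (3 * (y ^ 2 * √(1 + y ^ 2))) y :=
  (continuous_sq_mul_sqrt_one_add_sq.integral_hasStrictDerivAt 0 y).hasDerivAt.const_mul 3

lemma hasDerivAt_htilde (y : ℝ) : HasDerivAt htilde (y ^ 4 / √(1 + y ^ 2)) y :=
  ((continuous_pow_div_sqrt_one_add_sq 4).integral_hasStrictDerivAt 0 y).hasDerivAt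

lemma continuous_gtilde : Continuous gtilde :=
  continuous_iff_continuousAt.2 fun y => (hasDerivAt_gtilde y).continuousAt

lemma continuous_htilde : Continuous htilde :=
  continuous_iff_continuousAt.2 fun y => (hasDerivAt_htilde y).continuousAt

lemma gtilde_zero : gtilde 0 = 0 := by simp [gtilde]

lemma htilde_zero : htilde 0 = 0 := by simp [htilde]

lemma gtilde_sub_gtilde (a b : ℝ) :
    gtilde b - gtilde a = 3 * ∫ s in a..b, s ^ 2 * √(1 + s ^ 2) := by
  rw [gtilde, gtilde, ← mul_sub, integral_interval_sub_left
    (continuous_sq_mul_sqrt_one_add_sq.intervalIntegrable 0 b)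
    (continuous_sq_mul_sqrt_one_add_sq.intervalIntegrable 0 a)]

lemma pow_three_sub_le_gtilde_sub {a b : ℝ} (hab : a ≤ b) :
    b ^ 3 - a ^ 3 ≤ gtilde b - gtilde a := by
  have := le_integral_of_mul_pow_le (c := 1) 2 hab
    (continuous_sq_mul_sqrt_one_add_sq.intervalIntegrable a b) fun s _ => by
      nlinarith [one_le_sqrt_one_add_sq s, sq_nonneg s]
  rw [gtilde_sub_gtilde]
  norm_num at this
  linarith

lemma strictMono_gtilde : StrictMono gtilde := fun a b hab => by
  have := pow_three_sub_le_gtilde_sub hab.le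
  have := Odd.strictMono_pow (R := ℝ) (by decide : Odd 3) hab
  linarith

lemma pow_three_le_gtilde {y : ℝ} (hy : 0 ≤ y) : y ^ 3 ≤ gtilde y := by
  simpa [gtilde_zero] using pow_three_sub_le_gtilde_sub hy

lemma gtilde_le_pow_three {y : ℝ} (hy : y ≤ 0) : gtilde y ≤ y ^ 3 := by
  simpa [gtilde_zero] using pow_three_sub_le_gtilde_sub hy

lemma surjective_gtilde : Function.Surjective gtilde := by
  have hbot : Tendsto (fun y : ℝ => -(-y) ^ 3) atBot atBot :=
    tendsto_neg_atTop_atBot.comp ((tendsto_pow_atTop three_ne_zero).comp tendsto_neg_atBot_atTop)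
  refine continuous_gtilde.surjective
    (tendsto_atTop_mono' _ ((eventually_ge_atTop 0).mono fun y hy => pow_three_le_gtilde hy)
      (tendsto_pow_atTop three_ne_zero))
    (tendsto_atBot_mono' _ ((eventually_le_atBot 0).mono fun y hy => ?_) hbot)
  simpa [Odd.neg_pow (by decide : Odd 3)] using gtilde_le_pow_three hy

lemma three_mul_pow_four_le_four_mul_gtilde {y : ℝ} (hy : 0 ≤ y) :
    3 * y ^ 4 ≤ 4 * gtilde y := by
  have := le_integral_of_mul_pow_le (c := 1) 3 hy
    (continuous_sq_mul_sqrt_one_add_sq.intervalIntegrable 0 y) fun s _ => by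
      nlinarith [mul_le_mul_of_nonneg_left (le_sqrt_one_add_sq s) (sq_nonneg s)]
  rw [gtilde]
  norm_num at this
  linarith

lemma gtilde_le_pow_three_mul_sqrt {y : ℝ} (hy : 0 ≤ y) :
    gtilde y ≤ y ^ 3 * √(1 + y ^ 2) := by
  have := integral_le_of_le_mul_pow (c := √(1 + y ^ 2)) 2 hy
    (continuous_sq_mul_sqrt_one_add_sq.intervalIntegrable 0 y) fun s hs => by
      rw [mul_comm]
      gcongr
      exacts [hs.1, hs.2]
  rw [gtilde]
  norm_num at this
  linarith

lemma htilde_le {y : ℝ} (hy : 0 ≤ y) : htilde y ≤ y ^ 5 / 5 := by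
  have := integral_le_of_le_mul_pow (c := 1) 4 hy
    ((continuous_pow_div_sqrt_one_add_sq 4).intervalIntegrable 0 y) fun s _ => by
      rw [one_mul]
      exact div_le_self (by positivity) (one_le_sqrt_one_add_sq s)
  rw [htilde]
  norm_num at this
  linarith

lemma min_pow_le_ten_mul_htilde {y : ℝ} (hy : 0 ≤ y) : min (y ^ 4) (y ^ 5) ≤ 10 * htilde y := by
  have := le_integral_of_mul_pow_le (c := (1 + y)⁻¹) 4 hy
    ((continuous_pow_div_sqrt_one_add_sq 4).intervalIntegrable 0 y) fun s hs => by
      rw [inv_mul_eq_div]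
      refine div_le_div_of_nonneg_left (by positivity) (sqrt_one_add_sq_pos s) ?_
      exact (sqrt_le_left (by linarith [hs.1])).2 (by nlinarith [hs.1, hs.2])
  rw [← htilde] at this
  norm_num at this
  rw [inv_mul_eq_div, div_div, div_le_iff₀ (by positivity)] at this
  have hh0 : 0 ≤ htilde y := by nlinarith [pow_nonneg hy 5]
  rcases le_total y 1 with h1 | h1
  · exact (min_le_right _ _).trans (by nlinarith)
  · exact (min_le_left _ _).trans (by nlinarith [pow_le_pow_right₀ h1 (by norm_num : 4 ≤ 5)])

lemma strictMonoOn_htilde : StrictMonoOn htilde (Ici 0) :=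
  strictMonoOn_of_deriv_pos (convex_Ici 0) continuous_htilde.continuousOn fun x hx => by
    rw [interior_Ici] at hx
    rw [(hasDerivAt_htilde x).deriv]
    exact div_pos (pow_pos hx 4) (sqrt_one_add_sq_pos x)

lemma bijOn_htilde : BijOn htilde (Ici 0) (Ici 0) := by
  refine ⟨fun y hy => ?_, strictMonoOn_htilde.injOn, fun q hq => ?_⟩
  · simpa [htilde_zero] using strictMonoOn_htilde.monotoneOn self_mem_Ici hy hy
  · have hq0 : 0 ≤ q := hq
    have h1 : 1 ≤ 10 * q + 1 := by linarith
    have hqy : q ≤ htilde (10 * q + 1) := by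
      have := min_pow_le_ten_mul_htilde (y := 10 * q + 1) (by linarith)
      rw [min_eq_left (pow_le_pow_right₀ h1 (by norm_num))] at this
      nlinarith [le_self_pow₀ h1 (by norm_num : 4 ≠ 0)]
    obtain ⟨y, hy, rfl⟩ := intermediate_value_Icc (by linarith) continuous_htilde.continuousOn
      ⟨htilde_zero.symm ▸ hq0, hqy⟩
    exact ⟨y, hy.1, rfl⟩

lemma gtilde_div_three_sub_htilde (y : ℝ) :
    gtilde y / 3 - htilde y = ∫ s in (0 : ℝ)..y, s ^ 2 / √(1 + s ^ 2) := by
  rw [gtilde, mul_div_cancel_left₀ _ three_ne_zero, htilde, ← integral_sub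
    (continuous_sq_mul_sqrt_one_add_sq.intervalIntegrable 0 y)
    ((continuous_pow_div_sqrt_one_add_sq 4).intervalIntegrable 0 y)]
  refine integral_congr fun s _ => ?_
  have hs := sqrt_one_add_sq_pos s
  have hss := mul_self_sqrt (by positivity : (0 : ℝ) ≤ 1 + s ^ 2)
  field_simp
  linear_combination s ^ 2 * hss

lemma gtilde_div_three_sub_htilde_nonneg {y : ℝ} (hy : 0 ≤ y) :
    0 ≤ gtilde y / 3 - htilde y := by
  rw [gtilde_div_three_sub_htilde]
  exact integral_nonneg hy fun s _ => by positivity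

lemma sq_gtilde_div_three_sub_htilde_le {y : ℝ} (hy : 0 ≤ y) :
    (gtilde y / 3 - htilde y) ^ 2 ≤ min (y ^ 4) (y ^ 5) / 4 := by
  have hF := gtilde_div_three_sub_htilde_nonneg hy
  have hcube := integral_le_of_le_mul_pow (c := 1) 2 hy
    ((continuous_pow_div_sqrt_one_add_sq 2).intervalIntegrable 0 y) fun s _ => by
      rw [one_mul]
      exact div_le_self (sq_nonneg s) (one_le_sqrt_one_add_sq s)
  have hsq := integral_le_of_le_mul_pow (c := 1) 1 hy
    ((continuous_pow_div_sqrt_one_add_sq 2).intervalIntegrable 0 y) fun s hs => by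
      rw [one_mul, pow_one, div_le_iff₀ (sqrt_one_add_sq_pos s)]
      nlinarith [mul_le_mul_of_nonneg_left (le_sqrt_one_add_sq s) hs.1]
  rw [← gtilde_div_three_sub_htilde] at hcube hsq
  norm_num at hcube hsq
  rcases le_total y 1 with h1 | h1
  · rw [min_eq_right (pow_le_pow_of_le_one hy h1 (by norm_num))]
    nlinarith [pow_le_pow_of_le_one hy h1 (by norm_num : 5 ≤ 6)]
  · rw [min_eq_left (pow_le_pow_right₀ h1 (by norm_num))]
    nlinarith

def gtildeOrderIso : ℝ ≃o ℝ :=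
  strictMono_gtilde.orderIsoOfSurjective gtilde surjective_gtilde

def nsPressure (ρ : ℝ) : ℝ := htilde (gtildeOrderIso.symm ρ)

lemma gtilde_gtildeOrderIso_symm (ρ : ℝ) : gtilde (gtildeOrderIso.symm ρ) = ρ :=
  gtildeOrderIso.apply_symm_apply ρ

lemma gtildeOrderIso_symm_gtilde (y : ℝ) : gtildeOrderIso.symm (gtilde y) = y :=
  gtildeOrderIso.symm_apply_apply y

lemma gtildeOrderIso_symm_zero : gtildeOrderIso.symm 0 = 0 := by
  simpa only [gtilde_zero] using gtildeOrderIso_symm_gtilde 0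

lemma nsPressure_gtilde (y : ℝ) : nsPressure (gtilde y) = htilde y :=
  congrArg htilde (gtildeOrderIso_symm_gtilde y)

lemma exists_nonneg_gtilde_eq {ρ : ℝ} (hρ : 0 ≤ ρ) : ∃ y, 0 ≤ y ∧ gtilde y = ρ :=
  ⟨gtildeOrderIso.symm ρ, by
    rwa [← strictMono_gtilde.le_iff_le, gtilde_zero, gtilde_gtildeOrderIso_symm],
    gtilde_gtildeOrderIso_symm ρ⟩

lemma eqOn_nsPressure {P : ℝ → ℝ} (hP : ∀ y : ℝ, 0 ≤ y → P (gtilde y) = htilde y) :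
    EqOn P nsPressure (Ici 0) := fun ρ hρ => by
  obtain ⟨y, hy, rfl⟩ := exists_nonneg_gtilde_eq hρ
  rw [hP y hy, nsPressure_gtilde]

lemma bijOn_nsPressure : BijOn nsPressure (Ici 0) (Ici 0) :=
  bijOn_htilde.comp <| (Equiv.image_eq_iff_bijOn gtildeOrderIso.symm.toEquiv).1 <| by
    simp [gtildeOrderIso_symm_zero]

lemma hasDerivAt_nsPressure {y : ℝ} (hy : y ≠ 0) :
    HasDerivAt nsPressure (y ^ 2 / (3 * (1 + y ^ 2))) (gtilde y) := by
  have hs := sqrt_one_add_sq_pos y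
  have hg' : 3 * (y ^ 2 * √(1 + y ^ 2)) ≠ 0 := by positivity
  have hinv : HasDerivAt gtildeOrderIso.symm (3 * (y ^ 2 * √(1 + y ^ 2)))⁻¹ (gtilde y) := by
    refine .of_local_left_inverse gtildeOrderIso.symm.continuous.continuousAt ?_ hg'
      (.of_forall gtilde_gtildeOrderIso_symm)
    rw [gtildeOrderIso_symm_gtilde]
    exact hasDerivAt_gtilde y
  refine ((hasDerivAt_htilde y).comp_of_eq (gtilde y) hinv
    (gtildeOrderIso_symm_gtilde y).symm).congr_deriv ?_
  have hss := mul_self_sqrt (by positivity : (0 : ℝ) ≤ 1 + y ^ 2)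
  field_simp
  linear_combination -hss

lemma abs_nsPressure_sub_le {ρ : ℝ} (hρ : 0 ≤ ρ) : |nsPressure ρ - ρ / 3| ≤ 5 * √ρ := by
  obtain ⟨y, hy, rfl⟩ := exists_nonneg_gtilde_eq hρ
  rw [nsPressure_gtilde, ← abs_neg, neg_sub]
  refine abs_le_mul_sqrt_of_sq_le (by norm_num) ?_
  nlinarith [sq_gtilde_div_three_sub_htilde_le hy, min_le_left (y ^ 4) (y ^ 5),
    three_mul_pow_four_le_four_mul_gtilde hy]

lemma abs_sub_three_mul_nsPressure_le {ρ : ℝ} (hρ : 0 ≤ ρ) :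
    |ρ - 3 * nsPressure ρ| ≤ 5 * √(nsPressure ρ) := by
  obtain ⟨y, hy, rfl⟩ := exists_nonneg_gtilde_eq hρ
  rw [nsPressure_gtilde]
  refine abs_le_mul_sqrt_of_sq_le (by norm_num) ?_
  nlinarith [sq_gtilde_div_three_sub_htilde_le hy, min_pow_le_ten_mul_htilde hy]

lemma sqrt_gtilde_le {y : ℝ} (hy : 0 ≤ y) : √(gtilde y) ≤ 1 + y ^ 2 := by
  rw [sqrt_le_left (by positivity)]
  calc gtilde y ≤ y ^ 3 * √(1 + y ^ 2) := gtilde_le_pow_three_mul_sqrt hy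
    _ ≤ √(1 + y ^ 2) ^ 3 * √(1 + y ^ 2) := by gcongr; exact le_sqrt_one_add_sq y
    _ = (1 + y ^ 2) ^ 2 := by
      rw [← pow_succ, show 3 + 1 = 2 * 2 from rfl, pow_mul, sq_sqrt (by positivity)]

lemma abs_deriv_nsPressure_sub_le {ρ : ℝ} (hρ : 0 < ρ) :
    |deriv nsPressure ρ - 1 / 3| ≤ 5 * ρ ^ (-(1 / 2) : ℝ) := by
  obtain ⟨y, hy, rfl⟩ := exists_nonneg_gtilde_eq hρ.le
  have hy0 : y ≠ 0 := by rintro rfl; exact hρ.ne' gtilde_zero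
  have hsqrt := sqrt_gtilde_le hy
  have hdiff : y ^ 2 / (3 * (1 + y ^ 2)) - 1 / 3 = -(1 / (3 * (1 + y ^ 2))) := by
    field_simp; ring
  rw [(hasDerivAt_nsPressure hy0).deriv, hdiff, abs_neg, abs_of_pos (by positivity),
    rpow_neg hρ.le, ← sqrt_eq_rpow, ← div_eq_mul_inv, div_le_div_iff₀ (by positivity)
    (sqrt_pos.2 hρ)]
  nlinarith

lemma nsPressure_rpow_bounds_of_lt_one {ρ : ℝ} (hρ : 0 < ρ) (hρ1 : ρ < 1) :
    1 / 320 * ρ ^ ((2 : ℝ) / 3) ≤ deriv nsPressure ρ ∧ deriv nsPressure ρ ≤ ρ ^ ((2 : ℝ) / 3) ∧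
      1 / 320 * ρ ^ ((5 : ℝ) / 3) ≤ nsPressure ρ ∧ nsPressure ρ ≤ 5 * ρ ^ ((5 : ℝ) / 3) := by
  obtain ⟨y, hy, rfl⟩ := exists_nonneg_gtilde_eq hρ.le
  have hy0 : 0 < y := hy.lt_of_ne (by rintro rfl; exact hρ.ne' gtilde_zero)
  have hy1 : y ≤ 1 := strictMono_gtilde.le_iff_le.1
    (hρ1.le.trans (by simpa using pow_three_le_gtilde zero_le_one))
  -- `y³ ≤ ρ ≤ √2 y³` makes `t = ρ^(1/3)` comparable to `y`
  set t := gtilde y ^ ((1 : ℝ) / 3)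
  have ht (n : ℕ) : gtilde y ^ ((n : ℝ) / 3) = t ^ n := by
    rw [← rpow_mul_natCast hρ.le, one_div_mul_eq_div]
  have ht3 : t ^ 3 = gtilde y := by rw [← ht]; norm_num
  have ht0 : 0 ≤ t := by positivity
  have hyt : y ≤ t :=
    (pow_le_pow_iff_left₀ hy ht0 three_ne_zero).1 (ht3 ▸ pow_three_le_gtilde hy)
  have hty : t ≤ 2 * y := by
    refine (pow_le_pow_iff_left₀ ht0 (by positivity) three_ne_zero).1 ?_
    have hs : √(1 + y ^ 2) ≤ 2 := (sqrt_le_left zero_le_two).2 (by nlinarith)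
    nlinarith [gtilde_le_pow_three_mul_sqrt hy, pow_pos hy0 3]
  have hlow := min_pow_le_ten_mul_htilde hy
  rw [min_eq_right (pow_le_pow_of_le_one hy hy1 (by norm_num))] at hlow
  have hup := htilde_le hy
  rw [show (2 : ℝ) / 3 = (2 : ℕ) / 3 by norm_num, show (5 : ℝ) / 3 = (5 : ℕ) / 3 by norm_num,
    ht, ht, (hasDerivAt_nsPressure hy0.ne').deriv, nsPressure_gtilde]
  refine ⟨?_, ?_, ?_, ?_⟩
  · rw [le_div_iff₀ (by positivity)]
    nlinarith [pow_le_pow_left₀ ht0 hty 2, pow_le_one₀ hy hy1 (n := 2)]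
  · rw [div_le_iff₀ (by positivity)]
    nlinarith [pow_le_pow_left₀ hy hyt 2, sq_nonneg t]
  · nlinarith [pow_le_pow_left₀ ht0 hty 5]
  · nlinarith [pow_le_pow_left₀ hy hyt 5, pow_nonneg ht0 5]

/-- Quantitative bounds for the neutron star equation of state
`P_NS = h̃ ∘ g̃⁻¹`: (i) `|P_NS(ρ) − ρ/3| ≤ C√ρ` and `|P_NS′(ρ) − 1/3| ≤ C ρ^{−1/2}`;
(ii) for small `ρ > 0`, `c ρ^{2/3} ≤ P_NS′(ρ) ≤ ρ^{2/3}` and `c ρ^{5/3} ≤ P_NS(ρ) ≤ C ρ^{5/3}`;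
(iii) `P_NS` is a bijection of `[0,∞)` with `|P_NS⁻¹(q) − 3q| ≤ C√q`. -/
theorem stmt16 (P : ℝ → ℝ)
    (hP : ∀ y : ℝ, 0 ≤ y → P (gtilde y) = htilde y) :
    ∃ c C : ℝ, 0 < c ∧ c ≤ C ∧
      (∀ ρ : ℝ, 0 ≤ ρ → |P ρ - ρ / 3| ≤ C * Real.sqrt ρ) ∧
      (∀ ρ : ℝ, 0 < ρ → |deriv P ρ - 1 / 3| ≤ C * ρ ^ (-(1/2) : ℝ)) ∧
      (∃ ρ₀ : ℝ, 0 < ρ₀ ∧ ∀ ρ ∈ Set.Ioo (0:ℝ) ρ₀,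
        c * ρ ^ ((2:ℝ)/3) ≤ deriv P ρ ∧ deriv P ρ ≤ ρ ^ ((2:ℝ)/3) ∧
        c * ρ ^ ((5:ℝ)/3) ≤ P ρ ∧ P ρ ≤ C * ρ ^ ((5:ℝ)/3)) ∧
      Set.BijOn P (Set.Ici 0) (Set.Ici 0) ∧
      (∀ q : ℝ, 0 < q → ∀ ρ : ℝ, 0 ≤ ρ → P ρ = q → |ρ - 3 * q| ≤ C * Real.sqrt q) := by
  have hEq : EqOn P nsPressure (Ici 0) := eqOn_nsPressure hP
  have hderiv {ρ : ℝ} (hρ : 0 < ρ) : deriv P ρ = deriv nsPressure ρ :=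
    (hEq.eventuallyEq_of_mem (Ici_mem_nhds hρ)).deriv_eq
  refine ⟨1 / 320, 5, by norm_num, by norm_num, fun ρ hρ => ?_, fun ρ hρ => ?_,
    ⟨1, one_pos, fun ρ hρ => ?_⟩, bijOn_nsPressure.congr hEq.symm, fun q _ ρ hρ hq => ?_⟩
  · rw [hEq hρ]
    exact abs_nsPressure_sub_le hρ
  · rw [hderiv hρ]
    exact abs_deriv_nsPressure_sub_le hρ
  · rw [hderiv hρ.1, hEq hρ.1.le]
    exact nsPressure_rpow_bounds_of_lt_one hρ.1 hρ.2
  · rw [← hq, hEq hρ]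
    exact abs_sub_three_mul_nsPressure_le hρ
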